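/- arXiv:1509.05385 — 7 statements merged into one kernel-verified Lean document; each statement's English description precedes it below -/
import Mathlib

section
/- Let (B, p, x) and (B, p*, x*) be two non-normalized labeled seeds of rank n in F over P having the same exchange matrix B, with hatted variables ŷ_j and ŷ*_j respectively. Then the following are equivalent: (i) ŷ_j = ŷ*_j for all j ∈ {1,…,n}, and x_j / x*_j ∈ P for all j; (ii) there exist tuples c = (c_1,…,c_n) and d = (d_1,…,d_n) in Pⁿ such that for all j and both choices of sign: x*_j = x_j / c_j and (p*)_j^± = (p_j^± / d_j) · ∏_{i=1}^n c_i^{[±b_{ij}]_+}. (This is the equivalence of conditions (2) and (3) in Proposition 2.3, characterizing when two seeds lie in the same seed orbit.) -/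
open scoped BigOperators

private lemma prod_zpow_split' {G : Type*} [CommGroup G] {n : ℕ} (c : Fin n → G)
    (b : Fin n → ℤ) :
    ∏ i, c i ^ b i = (∏ i, c i ^ max (b i) 0) / (∏ i, c i ^ max (-b i) 0) := by
  rw [← Finset.prod_div_distrib]
  refine Finset.prod_congr rfl fun i _ => ?_
  have h : b i = max (b i) 0 - max (-b i) 0 := by omega
  conv_lhs => rw [h]
  rw [zpow_sub, div_eq_mul_inv]

private lemma split_eq {n : ℕ} {F : Type*} [Field F]
    (B : Matrix (Fin n) (Fin n) ℤ) (x x' : Fin n → Fˣ) (j : Fin n) :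
    (∏ i, ((x i / x' i)) ^ (max (B i j) 0) : Fˣ) / (∏ i, (x i / x' i) ^ (max (-B i j) 0))
      = (∏ i, x i ^ (B i j)) / (∏ i, x' i ^ (B i j)) := by
  rw [← prod_zpow_split']
  simp only [div_zpow]
  rw [Finset.prod_div_distrib]

private lemma lemC {F : Type*} [Field F] (a b : Fˣ) : b = a / (a / b) := by
  rw [Units.ext_iff]; push_cast; field_simp

private lemma lemB {F : Type*} [Field F] (a a' CP : Fˣ) :
    a' = a / (a * CP / a') * CP := by
  rw [Units.ext_iff]; push_cast; field_simp

private lemma lemA {F : Type*} [Field F] (a b a' b' X X' CP CM : Fˣ)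
    (h : a / b * X = a' / b' * X') (hs : CP / CM = X / X') :
    b' = b / (a * CP / a') * CM := by
  have hX : X = CP / CM * X' := (div_eq_iff_eq_mul.mp hs.symm)
  rw [hX, ← mul_assoc] at h
  have h2 : a / b * (CP / CM) = a' / b' := mul_right_cancel h
  have h2' := congrArg Units.val h2
  rw [Units.ext_iff]
  push_cast at h2' ⊢
  field_simp at h2' ⊢
  linear_combination h2'

private lemma lemD {F : Type*} [Field F] (a b X X' CP CM d : Fˣ)
    (h : CP / CM = X / X') :
    a / b * X = (a / d * CP) / (b / d * CM) * X' := by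
  have hX : X = CP / CM * X' := (div_eq_iff_eq_mul.mp h.symm)
  rw [hX]
  rw [Units.ext_iff]; push_cast; field_simp

/-- Proposition 2.3, equivalence of (2) and (3).
Two non-normalized labeled seeds `(B, p, x)` and `(B, p*, x*)` of rank `n` in `F` over the
coefficient group `P ⊆ Fˣ`, sharing the exchange matrix `B`, have the same hatted variables
and proportional cluster variables (with ratios in `P`) if and only if they are related by the
rescaling action (2.2)–(2.3). -/
theorem seed_orbit_rescaling_characterization
    (n : ℕ) (hn : 1 ≤ n) (F : Type*) [Field F] (P : Subgroup Fˣ)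
    (B : Matrix (Fin n) (Fin n) ℤ)
    (pP pM pP' pM' : Fin n → Fˣ) (x x' : Fin n → Fˣ)
    (hpP : ∀ j, pP j ∈ P) (hpM : ∀ j, pM j ∈ P)
    (hpP' : ∀ j, pP' j ∈ P) (hpM' : ∀ j, pM' j ∈ P) :
    ((∀ j, (pP j / pM j) * ∏ i, x i ^ (B i j) = (pP' j / pM' j) * ∏ i, x' i ^ (B i j)) ∧
      (∀ j, x j / x' j ∈ P))
    ↔
    (∃ c d : Fin n → Fˣ, (∀ j, c j ∈ P) ∧ (∀ j, d j ∈ P) ∧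
      (∀ j, x' j = x j / c j) ∧
      (∀ j, pP' j = pP j / d j * ∏ i, c i ^ (max (B i j) 0)) ∧
      (∀ j, pM' j = pM j / d j * ∏ i, c i ^ (max (-B i j) 0))) := by
  constructor
  · rintro ⟨hy, hx⟩
    refine ⟨fun i => x i / x' i,
      fun j => pP j * (∏ i, (x i / x' i) ^ (max (B i j) 0)) / pP' j, hx, ?_, ?_, ?_, ?_⟩
    · intro j
      exact P.div_mem (P.mul_mem (hpP j)
        (prod_mem fun i _ => P.zpow_mem (hx i) _)) (hpP' j)
    · intro j
      exact lemC (x j) (x' j)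
    · intro j
      exact lemB (pP j) (pP' j) _
    · intro j
      exact lemA (pP j) (pM j) (pP' j) (pM' j) _ _ _ _ (hy j) (split_eq B x x' j)
  · rintro ⟨c, d, hcP, hdP, hx', hP', hM'⟩
    have hc : c = fun i => x i / x' i := by
      funext i
      rw [hx' i]
      exact lemC (x i) (c i)
    refine ⟨fun j => ?_, fun j => ?_⟩
    · rw [hP' j, hM' j, hc]
      exact lemD (pP j) (pM j) _ _ _ _ (d j) (split_eq B x x' j)
    · rw [← congrFun hc j]
      exact hcP j
end

section
/- Let (B, p, x) be a non-normalized labeled seed of rank n in F over P, fix k ∈ {1,…,n} with b_{kk} = 0, and let (B', p', x') be a seed obtained from it by mutation in direction k, i.e.: B' = μ_k(B); p'_k^± = p_k^∓; for j ≠ k, p'_j^+ / p'_j^- = (p_j^+ / p_j^-) · (p_k^+)^{b_{kj}} if b_{kj} ≥ 0 and = (p_j^+ / p_j^-) · (p_k^-)^{b_{kj}} if b_{kj} ≤ 0; x'_j = x_j for j ≠ k; and x_k · x'_k = p_k^+ · ∏_{j=1}^n x_j^{[b_{jk}]_+} + p_k^- · ∏_{j=1}^n x_j^{[-b_{jk}]_+}.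 Assume x'_k ≠ 0. Then the hatted variables satisfy ŷ'_k = (ŷ_k)^{-1}, and ŷ'_j = ŷ_j · ŷ_k^{[b_{kj}]_+} · (ŷ_k + 1)^{-b_{kj}} for every j ≠ k. (Proposition 1.5: the hatted variables of adjacent seeds determine each other by the Y-pattern recurrence in the ambient field.) -/
/-!
Since `b_kk = 0`, the variable `x_k` does not occur in `ŷ_k`, so replacing `x_k` by `x'_k`
and negating the `k`-th column inverts `ŷ_k`. Writing `Q₋ = ∏ x_i ^ [-b_ik]_+`, the exchange
relation says `ŷ_k + 1 = x_k x'_k / (p_k^- Q₋)`. For `i, j ≠ k` the matrix mutation reads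
`b'_ij = b_ij + b_ik [b_kj]_+ + [-b_ik]_+ b_kj`, so the monomial of `ŷ'_j` is that of `ŷ_j`
times `(∏ x_i ^ b_ik) ^ [b_kj]_+ · (Q₋ / (x_k x'_k)) ^ b_kj`. In both sign cases the
coefficient mutation reads
`p'_j^+ / p'_j^- = (p_j^+ / p_j^-) (p_k^+ / p_k^-) ^ [b_kj]_+ (p_k^-) ^ b_kj`,
and together these give the recurrence.
-/

open Finset

theorem Int.sign_mul_max_mul_zero (a c : ℤ) :
    a.sign * max (a * c) 0 = a * max c 0 + max (-a) 0 * c := by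
  rcases lt_trichotomy a 0 with ha | rfl | ha
  · rw [Int.sign_eq_neg_one_of_neg ha]
    simp only [max_def]
    split_ifs <;> nlinarith
  · simp
  · rw [Int.sign_eq_one_of_pos ha]
    simp only [max_def]
    split_ifs <;> nlinarith

theorem eq_mul_div_zpow_max_zero_mul_zpow {G : Type*} [CommGroup G] {r r' u v : G} {c : ℤ}
    (hpos : 0 ≤ c → r' = r * u ^ c) (hneg : c ≤ 0 → r' = r * v ^ c) :
    r' = r * ((u / v) ^ max c 0 * v ^ c) := by
  rcases le_total 0 c with hc | hc
  · rw [hpos hc, max_eq_left hc, div_zpow, div_mul_cancel]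
  · rw [hneg hc, max_eq_right hc, zpow_zero, one_mul]

section Monomial

variable {ι M : Type*} [Fintype ι] [CommGroupWithZero M] {x : ι → M}

theorem prod_zpow_add (hx : ∀ i, x i ≠ 0) (a b : ι → ℤ) :
    ∏ i, x i ^ (a i + b i) = (∏ i, x i ^ a i) * ∏ i, x i ^ b i := by
  simp only [zpow_add₀ (hx _), prod_mul_distrib]

theorem prod_zpow_mul_right (a : ι → ℤ) (c : ℤ) :
    ∏ i, x i ^ (a i * c) = (∏ i, x i ^ a i) ^ c := by
  simp only [zpow_mul, prod_zpow]

theorem prod_zpow_eq_div (hx : ∀ i, x i ≠ 0) (a : ι → ℤ) :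
    ∏ i, x i ^ a i = (∏ i, x i ^ max (a i) 0) / ∏ i, x i ^ max (-a i) 0 := by
  simp only [← prod_div_distrib, ← zpow_sub₀ (hx _), max_zero_sub_max_neg_zero_eq_self]

theorem prod_zpow_eq_mul_div_of_ne [DecidableEq ι] {x' : ι → M} {e e' : ι → ℤ} (k : ι)
    (hxk : x k ≠ 0) (hx : ∀ i, i ≠ k → x' i = x i) (he : ∀ i, i ≠ k → e' i = e i) :
    ∏ i, x' i ^ e' i = (∏ i, x i ^ e i) * (x' k ^ e' k / x k ^ e k) := by
  rw [← mul_prod_erase univ _ (mem_univ k),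
    ← mul_prod_erase univ (fun i => x i ^ e i) (mem_univ k),
    prod_congr rfl fun i hi => by rw [hx i (ne_of_mem_erase hi), he i (ne_of_mem_erase hi)]]
  field_simp [zpow_ne_zero _ hxk]

theorem prod_zpow_mutate [DecidableEq ι] {x' : ι → M} {B B' : Matrix ι ι ℤ} {k j : ι}
    (hx : ∀ i, x i ≠ 0) (hx' : ∀ i, i ≠ k → x' i = x i) (hBkk : B k k = 0)
    (hB'kj : B' k j = -B k j)
    (hB' : ∀ i, i ≠ k → B' i j = B i j + B i k * max (B k j) 0 + max (-B i k) 0 * B k j) :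
    ∏ i, x' i ^ B' i j = (∏ i, x i ^ B i j) * (∏ i, x i ^ B i k) ^ max (B k j) 0 *
      (∏ i, x i ^ max (-B i k) 0) ^ B k j * ((x k * x' k) ^ B k j)⁻¹ := by
  rw [prod_zpow_eq_mul_div_of_ne k (hx k) hx' hB', prod_zpow_add hx, prod_zpow_add hx,
    prod_zpow_mul_right, prod_zpow_mul_right, hB'kj, hBkk, zero_mul, neg_zero, max_self, zero_mul,
    add_zero, add_zero, mul_zpow, mul_comm (x k ^ _), mul_inv, zpow_neg, div_eq_mul_inv]

end Monomial

section Seed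

variable {ι F : Type*} [Fintype ι] [Field F]

def hattedVariable (B : Matrix ι ι ℤ) (pP pM : ι → Fˣ) (x : ι → F) (j : ι) : F :=
  (pP j : F) / (pM j : F) * ∏ i, x i ^ B i j

theorem hattedVariable_add_one {B : Matrix ι ι ℤ} {pP pM : ι → Fˣ} {x : ι → F}
    (hx : ∀ i, x i ≠ 0) (k : ι) :
    hattedVariable B pP pM x k + 1 =
      ((pP k : F) * ∏ i, x i ^ max (B i k) 0 + (pM k : F) * ∏ i, x i ^ max (-B i k) 0) /
        ((pM k : F) * ∏ i, x i ^ max (-B i k) 0) := by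
  have hQ : ∏ i, x i ^ max (-B i k) 0 ≠ 0 := prod_ne_zero_iff.2 fun i _ => zpow_ne_zero _ (hx i)
  rw [hattedVariable, prod_zpow_eq_div hx]
  field_simp

end Seed

theorem hatted_variables_mutate_general
    (n : ℕ) (F : Type*) [Field F]
    (B B' : Matrix (Fin n) (Fin n) ℤ)
    (pP pM pP' pM' : Fin n → Fˣ) (x x' : Fin n → F)
    (hx : ∀ j, x j ≠ 0)
    (k : Fin n) (hBkk : B k k = 0)
    -- matrix mutation
    (hB' : ∀ i j, B' i j = if i = k ∨ j = k then -B i j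
      else B i j + Int.sign (B i k) * max (B i k * B k j) 0)
    -- coefficient mutation
    (hp'kP : pP' k = pM k) (hp'kM : pM' k = pP k)
    (hp'ratio : ∀ j, j ≠ k →
      (0 ≤ B k j → pP' j / pM' j = pP j / pM j * pP k ^ (B k j)) ∧
      (B k j ≤ 0 → pP' j / pM' j = pP j / pM j * pM k ^ (B k j)))
    -- cluster mutation (exchange relation)
    (hx'j : ∀ j, j ≠ k → x' j = x j)
    (hx'k : x k * x' k =
      (pP k : F) * ∏ j, x j ^ (max (B j k) 0) + (pM k : F) * ∏ j, x j ^ (max (-B j k) 0)) :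
    letI yhat : Fin n → F := fun j => ((pP j : F) / (pM j : F)) * ∏ i, x i ^ (B i j)
    letI yhat' : Fin n → F := fun j => ((pP' j : F) / (pM' j : F)) * ∏ i, x' i ^ (B' i j)
    yhat' k = (yhat k)⁻¹ ∧
      ∀ j, j ≠ k → yhat' j = yhat j * yhat k ^ (max (B k j) 0) * (yhat k + 1) ^ (-B k j) := by
  change hattedVariable B' pP' pM' x' k = (hattedVariable B pP pM x k)⁻¹ ∧ ∀ j, j ≠ k →
    hattedVariable B' pP' pM' x' j = hattedVariable B pP pM x j * hattedVariable B pP pM x k ^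
      (max (B k j) 0) * (hattedVariable B pP pM x k + 1) ^ (-B k j)
  constructor
  · have hB'k : ∀ i, B' i k = -B i k := fun i => by rw [hB', if_pos (Or.inr rfl)]
    rw [hattedVariable, hattedVariable, hp'kP, hp'kM,
      prod_zpow_eq_mul_div_of_ne k (hx k) hx'j fun _ _ => rfl]
    simp only [hB'k, hBkk, neg_zero, zpow_zero, div_one, mul_one, zpow_neg, prod_inv_distrib,
      mul_inv, inv_div]
  · intro j hj
    have hB'j :
        ∀ i, i ≠ k → B' i j = B i j + B i k * max (B k j) 0 + max (-B i k) 0 * B k j :=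
      fun i hi => by rw [hB', if_neg (by simp [hi, hj]), Int.sign_mul_max_mul_zero, add_assoc]
    have hcoef := congrArg Units.val <|
      eq_mul_div_zpow_max_zero_mul_zpow (hp'ratio j hj).1 (hp'ratio j hj).2
    push_cast at hcoef
    rw [hattedVariable, hattedVariable, hattedVariable_add_one hx, ← hx'k, hcoef,
      prod_zpow_mutate hx hx'j hBkk (by rw [hB', if_pos (Or.inl rfl)]) hB'j, hattedVariable]
    simp only [zpow_neg, div_zpow, inv_div, mul_zpow]
    ring

/-- Proposition 1.5.
If `(B', p', x')` is obtained from the non-normalized labeled seed `(B, p, x)` by mutation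
in direction `k` (with `b_{kk} = 0` and the mutated cluster variable nonzero), then the
hatted variables of the two seeds are related by the `Y`-pattern recurrence (1.8). -/
theorem hatted_variables_mutate
    (n : ℕ) (hn : 1 ≤ n) (F : Type*) [Field F] (P : Subgroup Fˣ)
    (B B' : Matrix (Fin n) (Fin n) ℤ)
    (pP pM pP' pM' : Fin n → Fˣ) (x x' : Fin n → F)
    (hmemPP : ∀ j, pP j ∈ P) (hmemPM : ∀ j, pM j ∈ P)
    (hmemPP' : ∀ j, pP' j ∈ P) (hmemPM' : ∀ j, pM' j ∈ P)
    (hx : ∀ j, x j ≠ 0)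
    (k : Fin n) (hBkk : B k k = 0)
    -- matrix mutation
    (hB' : ∀ i j, B' i j = if i = k ∨ j = k then -B i j
      else B i j + Int.sign (B i k) * max (B i k * B k j) 0)
    -- coefficient mutation
    (hp'kP : pP' k = pM k) (hp'kM : pM' k = pP k)
    (hp'ratio : ∀ j, j ≠ k →
      (0 ≤ B k j → pP' j / pM' j = pP j / pM j * pP k ^ (B k j)) ∧
      (B k j ≤ 0 → pP' j / pM' j = pP j / pM j * pM k ^ (B k j)))
    -- cluster mutation (exchange relation)
    (hx'j : ∀ j, j ≠ k → x' j = x j)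
    (hx'k : x k * x' k =
      (pP k : F) * ∏ j, x j ^ (max (B j k) 0) + (pM k : F) * ∏ j, x j ^ (max (-B j k) 0))
    (hx'k0 : x' k ≠ 0) :
    letI yhat : Fin n → F := fun j => ((pP j : F) / (pM j : F)) * ∏ i, x i ^ (B i j)
    letI yhat' : Fin n → F := fun j => ((pP' j : F) / (pM' j : F)) * ∏ i, x' i ^ (B' i j)
    yhat' k = (yhat k)⁻¹ ∧
      ∀ j, j ≠ k → yhat' j = yhat j * yhat k ^ (max (B k j) 0) * (yhat k + 1) ^ (-B k j) :=
  hatted_variables_mutate_general n F B B' pP pM pP' pM' x x' hx k hBkk hB' hp'kP hp'kM hp'ratio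
    hx'j hx'k
end

section
/- Let n ≥ 2, let S be a semifield, and let (B(t), y(t)) and (B̄(t), ȳ(t)) be two Y-patterns of rank n in S such that every matrix B(t) is skew-symmetrizable and indecomposable, and every matrix B̄(t) is skew-symmetrizable. Let N be a nerve in 𝕋_n. Suppose that for every vertex t of N and every edge of N at t labeled k, one of the following holds: (i) y_k(t) = ȳ_k(t) and b_{jk}(t) = b̄_{jk}(t) for all j; or (ii) y_k(t)^{-1} = ȳ_k(t) and b_{jk}(t) = −b̄_{jk}(t) for all j. Then either the two Y-patterns are equal (B(t) = B̄(t) and y(t) = ȳ(t) for all vertices t of 𝕋_n), or the second is the opposite of the first (B(t) = −B̄(t) and y_j(t)^{-1} = ȳ_j(t) for all j and all t). (Lemma 5.4: a Y-pattern is determined, up to taking opposites, by its data along a nerve.) -/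
/-- A semifield structure (in the sense of cluster algebras) on a multiplicative abelian
group `S`: an auxiliary addition `⊕` that is commutative, associative, and distributes
over the multiplication. -/
structure SemifieldStr (S : Type*) [CommGroup S] where
  add : S → S → S
  add_comm : ∀ a b, add a b = add b a
  add_assoc : ∀ a b c, add (add a b) c = add a (add b c)
  mul_add : ∀ a b c, a * add b c = add (a * b) (a * c)

/-- Matrix mutation in direction `k`. -/
def mutateMatrix {n : ℕ} (B : Matrix (Fin n) (Fin n) ℤ) (k : Fin n) :
    Matrix (Fin n) (Fin n) ℤ :=
  Matrix.of fun i j =>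
    if i = k ∨ j = k then -B i j
    else B i j + Int.sign (B i k) * max (B i k * B k j) 0

/-- The `y`-tuple of the mutation in direction `k` of the `Y`-seed `(B, y)`. -/
def mutateY {S : Type*} [CommGroup S] (sf : SemifieldStr S) {n : ℕ}
    (B : Matrix (Fin n) (Fin n) ℤ) (y : Fin n → S) (k : Fin n) : Fin n → S :=
  fun j => if j = k then (y k)⁻¹
    else y j * y k ^ (max (B k j) 0) * (sf.add (y k) 1) ^ (-B k j)

/-- A vertex of the labeled `n`-regular tree `𝕋_n`: a reduced word in the alphabet
`{1,…,n}`, i.e. a finite sequence with no two consecutive letters equal. -/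
def ReducedWord (n : ℕ) := {l : List (Fin n) // l.Chain' (· ≠ ·)}

/-- The edge labeled `k` of `𝕋_n` joins `w` to the reduced word obtained from `w` by
appending `k` (deleting the last letter instead if `w` ends in `k`): thus `w` and `w'`
are joined by an edge labeled `k` exactly when one of them is the other with `k`
appended. -/
def TnAdj {n : ℕ} (k : Fin n) (w w' : ReducedWord n) : Prop :=
  w'.1 = w.1 ++ [k] ∨ w.1 = w'.1 ++ [k]

/-- `B` is skew-symmetrizable: `d_i b_{ij} = −d_j b_{ji}` for some positive integers `d_i`. -/
def IsSkewSymmetrizable {n : ℕ} (B : Matrix (Fin n) (Fin n) ℤ) : Prop :=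
  ∃ d : Fin n → ℤ, (∀ i, 0 < d i) ∧ ∀ i j, d i * B i j = -(d j * B j i)

/-- `B` is indecomposable: the graph on `{1,…,n}` with an edge `{i,j}` whenever
`b_{ij} ≠ 0` is connected. -/
def IsIndecomposable {n : ℕ} (B : Matrix (Fin n) (Fin n) ℤ) : Prop :=
  ∀ i j : Fin n, Relation.ReflTransGen (fun a b => B a b ≠ 0 ∨ B b a ≠ 0) i j

lemma sf_add_inv_one {S : Type*} [CommGroup S] (sf : SemifieldStr S) (a : S) :
    sf.add a⁻¹ 1 = a⁻¹ * sf.add a 1 := by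
  have h := sf.mul_add a⁻¹ a 1
  rw [inv_mul_cancel, mul_one] at h
  rw [h, sf.add_comm]

lemma key_inv {S : Type*} [CommGroup S] (sf : SemifieldStr S) (a c : S) (b : ℤ) :
    a⁻¹ * (c⁻¹) ^ max (-b) 0 * (sf.add c⁻¹ 1) ^ (-(-b)) =
      (a * c ^ max b 0 * (sf.add c 1) ^ (-b))⁻¹ := by
  rw [sf_add_inv_one, neg_neg]
  have hm : max (-b) 0 = max b 0 - b := by omega
  rw [hm]
  generalize sf.add c 1 = X
  generalize max b 0 = m
  rw [mul_zpow]
  group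
  rw [mul_comm, mul_assoc, mul_comm (a ^ (-1 : ℤ))]

lemma mm_col_self {n : ℕ} (B : Matrix (Fin n) (Fin n) ℤ) (k j : Fin n) :
    mutateMatrix B k j k = -B j k := by simp [mutateMatrix]

lemma mm_col_ne {n : ℕ} (B : Matrix (Fin n) (Fin n) ℤ) (j : Fin n) {k l : Fin n} (h : k ≠ l) :
    mutateMatrix B l j k =
      if j = l then -B j k else B j k + Int.sign (B j l) * max (B j l * B l k) 0 := by
  by_cases hj : j = l <;> simp [mutateMatrix, h, hj]

lemma my_self {S : Type*} [CommGroup S] (sf : SemifieldStr S) {n : ℕ}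
    (B : Matrix (Fin n) (Fin n) ℤ) (y : Fin n → S) (k : Fin n) :
    mutateY sf B y k k = (y k)⁻¹ := by simp [mutateY]

lemma my_ne {S : Type*} [CommGroup S] (sf : SemifieldStr S) {n : ℕ}
    (B : Matrix (Fin n) (Fin n) ℤ) (y : Fin n → S) {j k : Fin n} (h : j ≠ k) :
    mutateY sf B y k j = y j * y k ^ max (B k j) 0 * (sf.add (y k) 1) ^ (-B k j) := by
  simp [mutateY, h]

lemma mutateMatrix_neg {n : ℕ} (B : Matrix (Fin n) (Fin n) ℤ) (k : Fin n) :
    mutateMatrix (-B) k = -(mutateMatrix B k) := by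
  ext i j
  by_cases h : i = k ∨ j = k
  · simp [mutateMatrix, h]
  · simp only [mutateMatrix, Matrix.neg_apply, Matrix.of_apply, if_neg h, Int.sign_neg,
      neg_mul_neg]
    ring

lemma mutateY_neg_inv {S : Type*} [CommGroup S] (sf : SemifieldStr S) {n : ℕ}
    (B : Matrix (Fin n) (Fin n) ℤ) (y : Fin n → S) (k : Fin n) :
    mutateY sf (-B) (fun j => (y j)⁻¹) k = fun j => (mutateY sf B y k j)⁻¹ := by
  funext j
  by_cases hj : j = k
  · subst hj; rw [my_self, my_self]
  · rw [my_ne sf _ _ hj, my_ne sf _ _ hj]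
    simp only [Matrix.neg_apply]
    exact key_inv sf (y j) (y k) (B k j)

lemma skew_mixed_zero {n : ℕ} {B Bb : Matrix (Fin n) (Fin n) ℤ}
    (hB : IsSkewSymmetrizable B) (hBb : IsSkewSymmetrizable Bb) {k l : Fin n}
    (h1 : B l k = Bb l k) (h2 : B k l = -(Bb k l)) :
    B k l = 0 ∧ B l k = 0 := by
  obtain ⟨d, hd, hds⟩ := hB
  obtain ⟨e, he, hes⟩ := hBb
  have e1 := hds k l
  have e2 := hes k l
  have hbkl : Bb k l = -(B k l) := by omega
  have hblk : Bb l k = B l k := h1.symm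
  rw [hbkl, hblk] at e2
  have key : (e l * d k + d l * e k) * B k l = 0 := by linear_combination e l * e1 - d l * e2
  have hpos : 0 < e l * d k + d l * e k := by
    have h3 := mul_pos (he l) (hd k)
    have h4 := mul_pos (hd l) (he k)
    linarith
  have hx : B k l = 0 := (mul_eq_zero.mp key).resolve_left hpos.ne'
  have h3 : d l * B l k = 0 := by linear_combination e1 - d k * hx
  exact ⟨hx, (mul_eq_zero.mp h3).resolve_left (hd l).ne'⟩

abbrev ColAgree {S : Type*} [CommGroup S] {n : ℕ} (B Bb : Matrix (Fin n) (Fin n) ℤ)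
    (y yb : Fin n → S) (k : Fin n) : Prop :=
  (y k = yb k ∧ ∀ j, B j k = Bb j k) ∨ ((y k)⁻¹ = yb k ∧ ∀ j, B j k = -(Bb j k))

lemma col_transfer {S : Type*} [CommGroup S] (sf : SemifieldStr S) {n : ℕ}
    {B Bb : Matrix (Fin n) (Fin n) ℤ} {y yb : Fin n → S}
    (hB : IsSkewSymmetrizable B) (hBb : IsSkewSymmetrizable Bb) (k l : Fin n)
    (hk : ColAgree B Bb y yb k) (hl : ColAgree B Bb y yb l) :
    ColAgree (mutateMatrix B l) (mutateMatrix Bb l)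
      (mutateY sf B y l) (mutateY sf Bb yb l) k := by
  by_cases hkl : k = l
  · subst hkl
    rcases hk with ⟨h1, h2⟩ | ⟨h1, h2⟩
    · exact Or.inl ⟨by rw [my_self, my_self, h1],
        fun j => by rw [mm_col_self, mm_col_self, h2 j]⟩
    · refine Or.inr ⟨?_, fun j => ?_⟩
      · rw [my_self, my_self, ← h1]
      · rw [mm_col_self, mm_col_self, h2 j]
  · rcases hk with ⟨hyk, hBk⟩ | ⟨hyk, hBk⟩ <;> rcases hl with ⟨hyl, hBl⟩ | ⟨hyl, hBl⟩
    · -- EE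
      refine Or.inl ⟨?_, fun j => ?_⟩
      · rw [my_ne sf B y hkl, my_ne sf Bb yb hkl, hyk, hyl, hBk l]
      · rw [mm_col_ne B j hkl, mm_col_ne Bb j hkl]
        by_cases hj : j = l
        · rw [if_pos hj, if_pos hj, hBk j]
        · rw [if_neg hj, if_neg hj, hBk j, hBl j, hBk l]
    · -- EO
      obtain ⟨hkl0, hlk0⟩ := skew_mixed_zero hB hBb (hBk l) (hBl k)
      have hblk0 : Bb l k = 0 := by have := hBk l; omega
      refine Or.inl ⟨?_, fun j => ?_⟩
      · rw [my_ne sf B y hkl, my_ne sf Bb yb hkl, hlk0, hblk0]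
        simpa using hyk
      · rw [mm_col_ne B j hkl, mm_col_ne Bb j hkl]
        by_cases hj : j = l
        · rw [if_pos hj, if_pos hj, hBk j]
        · rw [if_neg hj, if_neg hj, hlk0, hblk0]
          simpa using hBk j
    · -- OE
      obtain ⟨hlk0, hkl0⟩ := skew_mixed_zero hB hBb (k := l) (l := k) (hBl k) (hBk l)
      have hblk0 : Bb l k = 0 := by have := hBk l; omega
      refine Or.inr ⟨?_, fun j => ?_⟩
      · rw [my_ne sf B y hkl, my_ne sf Bb yb hkl, hlk0, hblk0]
        simpa using hyk
      · rw [mm_col_ne B j hkl, mm_col_ne Bb j hkl]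
        by_cases hj : j = l
        · rw [if_pos hj, if_pos hj, hBk j]
        · rw [if_neg hj, if_neg hj, hlk0, hblk0]
          simpa using hBk j
    · -- OO
      refine Or.inr ⟨?_, fun j => ?_⟩
      · have hb : Bb l k = -(B l k) := by have := hBk l; omega
        rw [my_ne sf B y hkl, my_ne sf Bb yb hkl, ← hyk, ← hyl, hb]
        exact (key_inv sf (y k) (y l) (B l k)).symm
      · rw [mm_col_ne B j hkl, mm_col_ne Bb j hkl]
        by_cases hj : j = l
        · rw [if_pos hj, if_pos hj, hBk j]
        · rw [if_neg hj, if_neg hj, hBk j, hBl j, hBk l, Int.sign_neg, neg_mul_neg]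
          ring

/-- Lemma 5.4.
Let `(B(t), y(t))` and `(B̄(t), ȳ(t))` be two `Y`-patterns of rank `n ≥ 2` in a semifield
`S`, with every `B(t)` skew-symmetrizable and indecomposable and every `B̄(t)`
skew-symmetrizable.  If along a nerve `N` of `𝕋_n` (a connected subgraph carrying every
edge label) the `k`-parts of the two patterns are equal or opposite at each edge of `N`
labeled `k`, then the two patterns are equal or opposite. -/
theorem yPattern_determined_on_nerve
    (n : ℕ) (hn : 2 ≤ n) {S : Type*} [CommGroup S] (sf : SemifieldStr S)
    (Bp Bbp : ReducedWord n → Matrix (Fin n) (Fin n) ℤ)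
    (yp ybp : ReducedWord n → (Fin n → S))
    -- the two collections form Y-patterns on 𝕋_n
    (hpat : ∀ (k : Fin n) (w w' : ReducedWord n), TnAdj k w w' →
      Bp w' = mutateMatrix (Bp w) k ∧ yp w' = mutateY sf (Bp w) (yp w) k)
    (hpat' : ∀ (k : Fin n) (w w' : ReducedWord n), TnAdj k w w' →
      Bbp w' = mutateMatrix (Bbp w) k ∧ ybp w' = mutateY sf (Bbp w) (ybp w) k)
    (hskew : ∀ w, IsSkewSymmetrizable (Bp w))
    (hind : ∀ w, IsIndecomposable (Bp w))
    (hskew' : ∀ w, IsSkewSymmetrizable (Bbp w))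
    -- a nerve: a set NE of edges of 𝕋_n, connected, carrying every label
    (NE : ReducedWord n → ReducedWord n → Prop)
    (hNsymm : ∀ w w', NE w w' → NE w' w)
    (hNsub : ∀ w w', NE w w' → ∃ k, TnAdj k w w')
    (hNconn : ∀ w w', (∃ u, NE w u) → (∃ u, NE w' u) →
      Relation.ReflTransGen NE w w')
    (hNlabels : ∀ k : Fin n, ∃ w w', NE w w' ∧ TnAdj k w w')
    -- hypothesis: at every edge of the nerve the k-parts are equal or opposite
    (hyp : ∀ w w' (k : Fin n), NE w w' → TnAdj k w w' →
      ((yp w k = ybp w k ∧ ∀ j, Bp w j k = Bbp w j k) ∨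
       ((yp w k)⁻¹ = ybp w k ∧ ∀ j, Bp w j k = -(Bbp w j k)))) :
    (∀ w, Bp w = Bbp w ∧ yp w = ybp w) ∨
    (∀ w, Bp w = -(Bbp w) ∧ ∀ j, (yp w j)⁻¹ = ybp w j) := by
  classical
  -- transport of column agreement along the nerve
  have hD_path : ∀ u v : ReducedWord n, Relation.ReflTransGen NE u v → ∀ k,
      ColAgree (Bp u) (Bbp u) (yp u) (ybp u) k →
      ColAgree (Bp v) (Bbp v) (yp v) (ybp v) k := by
    intro u v h
    induction h with
    | refl => exact fun k hk => hk
    | @tail b c hab hbc ih =>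
      intro k hk
      obtain ⟨l, hl⟩ := hNsub _ _ hbc
      obtain ⟨hB1, hy1⟩ := hpat l _ _ hl
      obtain ⟨hB2, hy2⟩ := hpat' l _ _ hl
      rw [hB1, hy1, hB2, hy2]
      exact col_transfer sf (hskew b) (hskew' b) k l (ih k hk) (hyp _ _ l hbc hl)
  have h0n : 0 < n := by omega
  obtain ⟨w0, w0', hne0, -⟩ := hNlabels ⟨0, h0n⟩
  have hD0 : ∀ k, ColAgree (Bp w0) (Bbp w0) (yp w0) (ybp w0) k := by
    intro k
    obtain ⟨u, u', hneu, hadju⟩ := hNlabels k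
    exact hD_path u w0 (hNconn u w0 ⟨u', hneu⟩ ⟨w0', hne0⟩) k (hyp u u' k hneu hadju)
  -- connectivity of the tree
  have conn : ∀ (P : ReducedWord n → Prop),
      (∀ (k : Fin n) (w w' : ReducedWord n), TnAdj k w w' → P w → P w') →
      P w0 → ∀ w, P w := by
    intro P hP hw0 w
    have key : ∀ (l : List (Fin n)) (hl : l.Chain' (· ≠ ·)),
        P ⟨l, hl⟩ ↔ P ⟨[], List.isChain_nil⟩ := by
      intro l
      induction l using List.reverseRecOn with
      | nil => intro hl; exact Iff.rfl
      | append_singleton l a ih =>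
        intro hl
        have hl' : l.Chain' (· ≠ ·) := (List.isChain_append.mp hl).1
        have h1 : TnAdj a ⟨l, hl'⟩ ⟨l ++ [a], hl⟩ := Or.inl rfl
        have h2 : TnAdj a ⟨l ++ [a], hl⟩ ⟨l, hl'⟩ := Or.inr rfl
        exact ⟨fun h => (ih hl').mp (hP a _ _ h2 h), fun h => hP a _ _ h1 ((ih hl').mpr h)⟩
    exact (key w.1 w.2).mpr ((key w0.1 w0.2).mp hw0)
  by_cases hE : ∀ k, yp w0 k = ybp w0 k ∧ ∀ j, Bp w0 j k = Bbp w0 j k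
  · left
    have stepEq : ∀ (k : Fin n) (w w' : ReducedWord n), TnAdj k w w' →
        (Bp w = Bbp w ∧ yp w = ybp w) → (Bp w' = Bbp w' ∧ yp w' = ybp w') := by
      intro k w w' h hw
      obtain ⟨hB, hy⟩ := hw
      obtain ⟨hB1, hy1⟩ := hpat k w w' h
      obtain ⟨hB2, hy2⟩ := hpat' k w w' h
      rw [hB1, hB2, hy1, hy2, hB, hy]
      exact ⟨rfl, rfl⟩
    exact conn _ stepEq
      ⟨Matrix.ext fun i j => (hE j).2 i, funext fun k => (hE k).1⟩
  · right
    rw [not_forall] at hE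
    obtain ⟨k0, hk0⟩ := hE
    have hOk0 := (hD0 k0).resolve_left hk0
    have hOall : ∀ k, (yp w0 k)⁻¹ = ybp w0 k ∧ ∀ j, Bp w0 j k = -(Bbp w0 j k) := by
      intro k
      rcases hD0 k with hEk | hOk
      · exfalso
        have propE : ∀ m, Relation.ReflTransGen
            (fun a b => Bp w0 a b ≠ 0 ∨ Bp w0 b a ≠ 0) k m →
            (yp w0 m = ybp w0 m ∧ ∀ j, Bp w0 j m = Bbp w0 j m) := by
          intro m h
          induction h with
          | refl => exact hEk
          | @tail b c hab hbc ih =>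
            rcases hD0 c with hEc | hOc
            · exact hEc
            · exfalso
              obtain ⟨hz1, hz2⟩ := skew_mixed_zero (hskew w0) (hskew' w0) (ih.2 c) (hOc.2 b)
              rcases hbc with h | h
              · exact h hz1
              · exact h hz2
        have hEk0 := propE k0 (hind w0 k k0)
        have hcol0 : ∀ j, Bp w0 j k0 = 0 := fun j => by
          have ha := hEk0.2 j; have hb := hOk0.2 j; omega
        obtain ⟨d, hd, hds⟩ := hskew w0
        have hrow0 : ∀ j, Bp w0 k0 j = 0 := by
          intro j
          have h := hds k0 j
          rw [hcol0 j, mul_zero, neg_zero] at h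
          exact (mul_eq_zero.mp h).resolve_left (hd k0).ne'
        have : Nontrivial (Fin n) := Fin.nontrivial_iff_two_le.mpr hn
        obtain ⟨j0, hj0⟩ := exists_ne k0
        have hstuck : ∀ m, Relation.ReflTransGen
            (fun a b => Bp w0 a b ≠ 0 ∨ Bp w0 b a ≠ 0) k0 m → m = k0 := by
          intro m h
          induction h with
          | refl => rfl
          | @tail b c hab hbc ih =>
            rw [ih] at hbc
            rcases hbc with h | h
            · exact absurd (hrow0 c) h
            · exact absurd (hcol0 c) h
        exact hj0 (hstuck j0 (hind w0 k0 j0))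
      · exact hOk
    have stepOpp : ∀ (k : Fin n) (w w' : ReducedWord n), TnAdj k w w' →
        (Bp w = -(Bbp w) ∧ ∀ j, (yp w j)⁻¹ = ybp w j) →
        (Bp w' = -(Bbp w') ∧ ∀ j, (yp w' j)⁻¹ = ybp w' j) := by
      intro k w w' h hw
      obtain ⟨hB, hy⟩ := hw
      obtain ⟨hB1, hy1⟩ := hpat k w w' h
      obtain ⟨hB2, hy2⟩ := hpat' k w w' h
      have hBb : Bbp w = -(Bp w) := by rw [hB]; simp
      have hyb : ybp w = fun j => (yp w j)⁻¹ := funext fun j => (hy j).symm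
      constructor
      · rw [hB1, hB2, hBb, mutateMatrix_neg, neg_neg]
      · intro j
        rw [hy1, hy2, hBb, hyb, mutateY_neg_inv]
    exact conn _ stepOpp
      ⟨Matrix.ext fun i j => by rw [(hOall j).2 i]; simp, fun j => (hOall j).1⟩
end

section
/- For every subset S ⊆ {1,…,n} with |S| = n − k, the maximal minors of G(X) agree with those of X up to a fixed monomial factor in cyclically-consecutive Plücker coordinates: Δ_S(G(X)) = ( ∏_{i=1}^{n−k−1} Δ_{[i+k+1, n+i]}(X) ) · Δ_S(X). (This is the special case I = [1, n−k] of Lemma 9.2; it is the proportionality G*∘F*(Δ_S) ≍ Δ_S used in the proof of Theorem 9.1, generalizing equation (3.1) from the case (k,n) = (2,5).) -/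
open scoped BigOperators

/-- The column index (0-based, in `Fin n`) corresponding to the residue in `{1,…,n}` of
the integer `a` modulo `n`. -/
def colIdx (n : ℕ) [NeZero n] (a : ℤ) : Fin n :=
  ⟨((a - 1) % (n : ℤ)).toNat, by
    have hn : 0 < n := Nat.pos_of_ne_zero (NeZero.ne n)
    have h1 : 0 ≤ (a - 1) % (n : ℤ) := Int.emod_nonneg _ (by exact_mod_cast hn.ne')
    have h2 : (a - 1) % (n : ℤ) < (n : ℤ) := Int.emod_lt_of_pos _ (by exact_mod_cast hn)
    omega⟩

/-- The Plücker coordinate `Δ_S(X)` of an `(n−k)×n` matrix `X`, for a finite set `S` of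
integers: reduce the entries of `S` modulo `n` to residues in `{1,…,n}`; if fewer than
`n−k` distinct residues result, the value is `0`; otherwise it is the determinant of the
`(n−k)×(n−k)` submatrix of `X` on the corresponding columns, taken in increasing order. -/
def pluecker {R : Type*} [CommRing R] (k n : ℕ) [NeZero n]
    (X : Matrix (Fin (n - k)) (Fin n) R) (S : Finset ℤ) : R :=
  if h : (S.image (colIdx n)).card = n - k then
    (X.submatrix id (⇑((S.image (colIdx n)).orderEmbOfFin h))).det
  else 0

/-- The band matrix `G(X)`, with `G(X)_{i,j} = Δ_{[i+k+1, n+i−1] ∪ {j}}(X)` (indices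
`1`-based). -/
noncomputable def Gmat {R : Type*} [CommRing R] (k n : ℕ) [NeZero n]
    (X : Matrix (Fin (n - k)) (Fin n) R) : Matrix (Fin (n - k)) (Fin n) R :=
  Matrix.of fun i j =>
    pluecker k n X
      (Finset.Icc (((i : ℕ) : ℤ) + 1 + k + 1) ((n : ℤ) + (((i : ℕ) : ℤ) + 1) - 1) ∪
        {((j : ℕ) : ℤ) + 1})

/-!
Expanding the minor `G(X)_{i,j}` along the slot of column `j` writes row `i` of `G(X)` as a
combination of the rows of `X` whose coefficients do not depend on `j`, so `G(X) = C(X) X` and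
`Δ_S(G(X)) = det C(X) · Δ_S(X)` for every `S`. To compute `det C(X)` take `S = [1, n−k]`: on
these columns `G(X)` is upper triangular, because for `j < i` column `j` already lies in the
window `[i+k+1, n+i−1]`, and its diagonal entries are the cyclic coordinates
`Δ_{[i+k+1, n+i]}(X)`, the last one being `Δ_{[1, n−k]}(X)` itself. Cancelling `Δ_{[1, n−k]}(X)`
is legitimate for the generic matrix over `ℤ[x_{rc}]`, and the identity specializes to every `X`.
-/

lemma Matrix.submatrix_id_update {m N o R : Type*} [DecidableEq o] (X : Matrix m N R)
    (f : o → N) (i : o) (j : N) :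
    X.submatrix id (Function.update f i j) = (X.submatrix id f).updateCol i fun r => X r j := by
  ext r t
  rcases eq_or_ne t i with rfl | ht <;> simp [*]

lemma Finset.prod_range_add_one_eq_prod_Icc_mul {M : Type*} [CommMonoid M] (f : ℕ → M) {m : ℕ}
    (hm : 0 < m) :
    ∏ i ∈ Finset.range m, f (i + 1) = (∏ a ∈ Finset.Icc 1 (m - 1), f a) * f m := by
  obtain ⟨p, rfl⟩ := Nat.exists_eq_add_one_of_ne_zero hm.ne'
  rw [Finset.prod_range_succ, Nat.add_sub_cancel, Finset.range_eq_Ico, Finset.prod_Ico_add' f,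
    zero_add, Finset.Ico_add_one_right_eq_Icc]

section colIdx

variable {n : ℕ} [NeZero n]

lemma colIdx_val_of_mem_Icc {a : ℤ} (h1 : 1 ≤ a) (h2 : a ≤ n) :
    (colIdx n a : ℕ) = (a - 1).toNat := by
  simp only [colIdx]
  rw [Int.emod_eq_of_lt (by omega) (by omega)]

lemma colIdx_natCast_add_one (j : Fin n) : colIdx n (((j : ℕ) : ℤ) + 1) = j := by
  ext
  rw [colIdx_val_of_mem_Icc (by omega) (by omega)]
  omega

lemma colIdx_add_self (a : ℤ) : colIdx n (n + a) = colIdx n a := by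
  ext
  simp only [colIdx]
  rw [show (n : ℤ) + a - 1 = a - 1 + n by ring, Int.add_emod_right]

lemma image_colIdx_Icc_one {m : ℕ} (hm : m ≤ n) :
    (Finset.Icc (1 : ℤ) m).image (colIdx n) = Finset.univ.image (Fin.castLE hm) := by
  have hIcc : Finset.Icc (1 : ℤ) m = Finset.univ.image fun t : Fin m => ((t : ℕ) : ℤ) + 1 := by
    ext a
    simp only [Finset.mem_Icc, Finset.mem_image, Finset.mem_univ, true_and]
    constructor
    · exact fun ha => ⟨⟨(a - 1).toNat, by omega⟩, by simp only; omega⟩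
    · rintro ⟨t, rfl⟩
      omega
  rw [hIcc, Finset.image_image]
  exact Finset.image_congr fun t _ => colIdx_natCast_add_one (Fin.castLE hm t)

end colIdx

section pluecker

variable {R : Type*} [CommRing R] {k n : ℕ} [NeZero n]

lemma pluecker_congr (X : Matrix (Fin (n - k)) (Fin n) R) {S S' : Finset ℤ}
    (h : S.image (colIdx n) = S'.image (colIdx n)) :
    pluecker k n X S = pluecker k n X S' := by
  simp only [pluecker, h]

lemma pluecker_eq_zero_of_card_lt (X : Matrix (Fin (n - k)) (Fin n) R) {S : Finset ℤ}
    (h : (S.image (colIdx n)).card < n - k) : pluecker k n X S = 0 :=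
  dif_neg h.ne

lemma pluecker_eq_det_of_strictMono (X : Matrix (Fin (n - k)) (Fin n) R) {S : Finset ℤ}
    {f : Fin (n - k) → Fin n} (hf : StrictMono f)
    (hS : S.image (colIdx n) = Finset.univ.image f) :
    pluecker k n X S = (X.submatrix id f).det := by
  have hcard : (S.image (colIdx n)).card = n - k := by
    rw [hS, Finset.card_image_of_injective _ hf.injective, Finset.card_univ, Fintype.card_fin]
  have hmem (t : Fin (n - k)) : f t ∈ S.image (colIdx n) :=
    hS ▸ Finset.mem_image_of_mem f (Finset.mem_univ t)
  rw [pluecker, dif_pos hcard, ← Finset.orderEmbOfFin_unique hcard hmem hf]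

lemma pluecker_Icc_one (X : Matrix (Fin (n - k)) (Fin n) R) :
    pluecker k n X (Finset.Icc 1 ((n - k : ℕ) : ℤ))
      = (X.submatrix id (Fin.castLE (n.sub_le k))).det :=
  pluecker_eq_det_of_strictMono X (Fin.strictMono_castLE _) (image_colIdx_Icc_one _)

lemma pluecker_mul (C : Matrix (Fin (n - k)) (Fin (n - k)) R)
    (X : Matrix (Fin (n - k)) (Fin n) R) (S : Finset ℤ) :
    pluecker k n (C * X) S = C.det * pluecker k n X S := by
  unfold pluecker
  split_ifs
  · rw [Matrix.submatrix_mul C X id id _ Function.bijective_id, Matrix.submatrix_id_id,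
      Matrix.det_mul]
  · rw [mul_zero]

lemma pluecker_map {S : Type*} [CommRing S] (φ : R →+* S)
    (X : Matrix (Fin (n - k)) (Fin n) R) (T : Finset ℤ) :
    pluecker k n (X.map φ) T = φ (pluecker k n X T) := by
  unfold pluecker
  split_ifs
  · rw [RingHom.map_det, RingHom.mapMatrix_apply, Matrix.submatrix_map]
  · rw [map_zero]

end pluecker

section band

variable {k n : ℕ}

/-- The window `[i+k+1, n+i−1]` of row `i` of `G(X)`, for the `0`-based row index `i`. -/
noncomputable def gWindow (k n : ℕ) (i : Fin (n - k)) : Finset ℤ :=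
  Finset.Icc (((i : ℕ) : ℤ) + 1 + k + 1) ((n : ℤ) + (((i : ℕ) : ℤ) + 1) - 1)

lemma Gmat_apply {R : Type*} [CommRing R] [NeZero n] (X : Matrix (Fin (n - k)) (Fin n) R)
    (i : Fin (n - k)) (j : Fin n) :
    Gmat k n X i j = pluecker k n X (gWindow k n i ∪ {((j : ℕ) : ℤ) + 1}) :=
  rfl

lemma mem_image_gWindow [NeZero n] (i : Fin (n - k)) (c : Fin n) :
    c ∈ (gWindow k n i).image (colIdx n) ↔ (c : ℕ) < i ∨ (i : ℕ) + k < c := by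
  have hi := i.isLt
  have hc := c.isLt
  simp only [Finset.mem_image, gWindow, Finset.mem_Icc]
  constructor
  · rintro ⟨a, ha, rfl⟩
    by_cases han : a ≤ n
    · have := colIdx_val_of_mem_Icc (n := n) (by omega) han
      omega
    · rw [show a = n + (a - n) by ring, colIdx_add_self]
      have := colIdx_val_of_mem_Icc (n := n) (a := a - n) (by omega) (by omega)
      omega
  · rintro (h | h)
    · refine ⟨n + (((c : ℕ) : ℤ) + 1), by omega, ?_⟩
      rw [colIdx_add_self, colIdx_natCast_add_one]
    · exact ⟨((c : ℕ) : ℤ) + 1, by omega, colIdx_natCast_add_one c⟩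

lemma card_image_gWindow_lt [NeZero n] (i : Fin (n - k)) :
    ((gWindow k n i).image (colIdx n)).card < n - k := by
  have hi := i.isLt
  calc _ ≤ (gWindow k n i).card := Finset.card_image_le
    _ < n - k := by rw [gWindow, Int.card_Icc]; omega

/-- The columns `0, …, i−1, i+k+1, …, n−1` of the window of row `i` in increasing order, with
the extra column `i + k` in slot `i`. -/
def bandCols (k n : ℕ) (i : Fin (n - k)) (t : Fin (n - k)) : Fin n :=
  if (t : ℕ) < i then Fin.castLE (n.sub_le k) t else ⟨t + k, by omega⟩

lemma update_bandCols_apply (i : Fin (n - k)) (j : Fin n) (t : Fin (n - k)) :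
    (Function.update (bandCols k n i) i j t : ℕ)
      = if (t : ℕ) < i then (t : ℕ) else if (t : ℕ) = i then (j : ℕ) else (t : ℕ) + k := by
  rcases eq_or_ne t i with rfl | ht
  · simp
  · simp only [Function.update_of_ne ht, bandCols, Fin.val_eq_val, ht, if_false]
    split_ifs <;> rfl

lemma strictMono_update_bandCols (i : Fin (n - k)) {j : Fin n} (h1 : (i : ℕ) ≤ j)
    (h2 : (j : ℕ) ≤ i + k) : StrictMono (Function.update (bandCols k n i) i j) := by
  intro s t hst
  rw [Fin.lt_def] at hst ⊢
  simp only [update_bandCols_apply]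
  split_ifs <;> omega

lemma image_gWindow_union [NeZero n] (i : Fin (n - k)) (j : Fin n) :
    (gWindow k n i ∪ {((j : ℕ) : ℤ) + 1}).image (colIdx n)
      = Finset.univ.image (Function.update (bandCols k n i) i j) := by
  have hi := i.isLt
  ext c
  rw [Finset.image_union, Finset.image_singleton, colIdx_natCast_add_one, Finset.mem_union,
    mem_image_gWindow, Finset.mem_singleton, Finset.mem_image]
  simp only [Finset.mem_univ, true_and, ← Fin.val_inj, update_bandCols_apply]
  constructor
  · rintro ((h | h) | h)
    · exact ⟨⟨c, by omega⟩, by simp [h]⟩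
    · exact ⟨⟨c - k, by omega⟩, by dsimp only; split_ifs <;> omega⟩
    · exact ⟨i, by simp [h]⟩
  · rintro ⟨t, ht⟩
    split_ifs at ht <;> omega

lemma Gmat_apply_eq_zero {R : Type*} [CommRing R] [NeZero n] (X : Matrix (Fin (n - k)) (Fin n) R)
    {i : Fin (n - k)} {j : Fin n} (h : (j : ℕ) < i ∨ (i : ℕ) + k < j) : Gmat k n X i j = 0 := by
  rw [Gmat_apply]
  apply pluecker_eq_zero_of_card_lt
  rw [Finset.image_union, Finset.image_singleton, colIdx_natCast_add_one, Finset.union_comm,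
    ← Finset.insert_eq, Finset.insert_eq_self.2 ((mem_image_gWindow i j).2 h)]
  exact card_image_gWindow_lt i

lemma det_submatrix_update_bandCols_eq_zero {R : Type*} [CommRing R]
    (X : Matrix (Fin (n - k)) (Fin n) R) {i : Fin (n - k)} {j : Fin n}
    (h : (j : ℕ) < i ∨ (i : ℕ) + k < j) :
    (X.submatrix id (Function.update (bandCols k n i) i j)).det = 0 := by
  have hi := i.isLt
  have hj := j.isLt
  obtain ⟨t, hti, ht⟩ : ∃ t, t ≠ i ∧ Function.update (bandCols k n i) i j t = j := by
    rcases h with h | h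
    · exact ⟨⟨j, by omega⟩, Fin.ne_of_val_ne (by dsimp only; omega),
        by ext; simp [update_bandCols_apply, h]⟩
    · exact ⟨⟨j - k, by omega⟩, Fin.ne_of_val_ne (by dsimp only; omega),
        by ext; rw [update_bandCols_apply]; dsimp only; split_ifs <;> omega⟩
  refine Matrix.det_zero_of_column_eq hti fun r => ?_
  simp [ht]

lemma Gmat_apply_eq_det {R : Type*} [CommRing R] [NeZero n] (X : Matrix (Fin (n - k)) (Fin n) R)
    (i : Fin (n - k)) (j : Fin n) :
    Gmat k n X i j = (X.submatrix id (Function.update (bandCols k n i) i j)).det := by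
  by_cases h : (i : ℕ) ≤ j ∧ (j : ℕ) ≤ i + k
  · exact pluecker_eq_det_of_strictMono X (strictMono_update_bandCols i h.1 h.2)
      (image_gWindow_union i j)
  · have h' : (j : ℕ) < i ∨ (i : ℕ) + k < j := by omega
    rw [Gmat_apply_eq_zero X h', det_submatrix_update_bandCols_eq_zero X h']

end band

/-- Row `i` holds the cofactors of slot `i` in the minors `G(X)_{i,j}`, so that Cramer's rule gives
`G(X) = C(X) X`. -/
noncomputable def gCoeff {R : Type*} [CommRing R] (k n : ℕ) (X : Matrix (Fin (n - k)) (Fin n) R) :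
    Matrix (Fin (n - k)) (Fin (n - k)) R :=
  Matrix.of fun i r => (X.submatrix id (bandCols k n i)).adjugate i r

lemma Gmat_eq_gCoeff_mul {R : Type*} [CommRing R] {k n : ℕ} [NeZero n]
    (X : Matrix (Fin (n - k)) (Fin n) R) : Gmat k n X = gCoeff k n X * X := by
  ext i j
  rw [Gmat_apply_eq_det, Matrix.submatrix_id_update, ← Matrix.cramer_apply,
    Matrix.cramer_eq_adjugate_mulVec]
  rfl

lemma gCoeff_map {R S : Type*} [CommRing R] [CommRing S] {k n : ℕ} (φ : R →+* S)
    (X : Matrix (Fin (n - k)) (Fin n) R) : gCoeff k n (X.map φ) = (gCoeff k n X).map φ := by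
  ext i r
  rw [gCoeff, gCoeff, Matrix.of_apply, Matrix.map_apply, Matrix.of_apply, Matrix.submatrix_map,
    ← RingHom.mapMatrix_apply, ← RingHom.map_adjugate, RingHom.mapMatrix_apply, Matrix.map_apply]

section triangular

variable {R : Type*} [CommRing R] {k n : ℕ} [NeZero n]

lemma pluecker_image_add_self (X : Matrix (Fin (n - k)) (Fin n) R) (S : Finset ℤ) :
    pluecker k n X (S.image ((n : ℤ) + ·)) = pluecker k n X S :=
  pluecker_congr X <| by
    rw [Finset.image_image]
    exact Finset.image_congr fun a _ => colIdx_add_self a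

lemma Gmat_apply_castLE_self (X : Matrix (Fin (n - k)) (Fin n) R) (i : Fin (n - k)) :
    Gmat k n X i (Fin.castLE (n.sub_le k) i)
      = pluecker k n X (Finset.Icc (((i + 1 : ℕ) : ℤ) + k + 1) (n + ((i + 1 : ℕ) : ℤ))) := by
  have hIcc : Finset.Icc (((i + 1 : ℕ) : ℤ) + k + 1) (n + ((i + 1 : ℕ) : ℤ))
      = gWindow k n i ∪ {(n : ℤ) + ((i : ℕ) + 1)} := by
    ext a
    simp only [gWindow, Finset.mem_Icc, Finset.mem_union, Finset.mem_singleton]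
    omega
  rw [Gmat_apply, hIcc]
  refine pluecker_congr X ?_
  simp only [Finset.image_union, Finset.image_singleton, colIdx_add_self, Fin.val_castLE]

lemma pluecker_Gmat_Icc_one (hkn : k < n) (X : Matrix (Fin (n - k)) (Fin n) R) :
    pluecker k n (Gmat k n X) (Finset.Icc 1 ((n - k : ℕ) : ℤ))
      = (∏ a ∈ Finset.Icc 1 (n - k - 1),
          pluecker k n X (Finset.Icc ((a : ℤ) + k + 1) ((n : ℤ) + a)))
        * pluecker k n X (Finset.Icc 1 ((n - k : ℕ) : ℤ)) := by
  have hupper : ((Gmat k n X).submatrix id (Fin.castLE (n.sub_le k))).IsUpperTriangular :=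
    fun i j hji => Gmat_apply_eq_zero X (Or.inl hji)
  have hlast : Finset.Icc (((n - k : ℕ) : ℤ) + k + 1) (n + ((n - k : ℕ) : ℤ))
      = (Finset.Icc 1 ((n - k : ℕ) : ℤ)).image ((n : ℤ) + ·) := by
    rw [Finset.image_add_left_Icc]
    congr 1
    omega
  rw [pluecker_Icc_one, Matrix.det_of_isUpperTriangular hupper]
  simp only [Matrix.submatrix_apply, id, Gmat_apply_castLE_self]
  rw [Fin.prod_univ_eq_prod_range (fun a => pluecker k n X
      (Finset.Icc (((a + 1 : ℕ) : ℤ) + k + 1) (n + ((a + 1 : ℕ) : ℤ)))),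
    Finset.prod_range_add_one_eq_prod_Icc_mul (fun a => pluecker k n X
      (Finset.Icc ((a : ℤ) + k + 1) (n + (a : ℤ)))) (by omega),
    hlast, pluecker_image_add_self]

end triangular

section generic

variable {k n : ℕ} [NeZero n]

lemma pluecker_Icc_one_mvPolynomialX_ne_zero :
    pluecker k n (Matrix.mvPolynomialX (Fin (n - k)) (Fin n) ℤ)
      (Finset.Icc 1 ((n - k : ℕ) : ℤ)) ≠ 0 := by
  let E : Matrix (Fin (n - k)) (Fin n) ℤ := Matrix.of fun r c => if (r : ℕ) = c then 1 else 0
  have hE : pluecker k n E (Finset.Icc 1 ((n - k : ℕ) : ℤ)) = 1 := by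
    have hE₁ : E.submatrix id (Fin.castLE (n.sub_le k)) = 1 := by
      ext r t
      simp [E, Matrix.one_apply, Fin.val_inj]
    rw [pluecker_Icc_one, hE₁, Matrix.det_one]
  intro h
  have h' := congrArg (MvPolynomial.eval₂Hom (RingHom.id ℤ) fun p => E p.1 p.2) h
  rw [map_zero, ← pluecker_map, MvPolynomial.coe_eval₂Hom, Matrix.mvPolynomialX_map_eval₂,
    hE] at h'
  exact one_ne_zero h'

lemma det_gCoeff {R : Type*} [CommRing R] (hkn : k < n) (X : Matrix (Fin (n - k)) (Fin n) R) :
    (gCoeff k n X).det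
      = ∏ a ∈ Finset.Icc 1 (n - k - 1),
          pluecker k n X (Finset.Icc ((a : ℤ) + k + 1) ((n : ℤ) + a)) := by
  let X₀ := Matrix.mvPolynomialX (Fin (n - k)) (Fin n) ℤ
  have hgeneric : (gCoeff k n X₀).det
      = ∏ a ∈ Finset.Icc 1 (n - k - 1),
          pluecker k n X₀ (Finset.Icc ((a : ℤ) + k + 1) ((n : ℤ) + a)) :=
    mul_right_cancel₀ pluecker_Icc_one_mvPolynomialX_ne_zero <| by
      rw [← pluecker_mul, ← Gmat_eq_gCoeff_mul, pluecker_Gmat_Icc_one hkn]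
  rw [← Matrix.mvPolynomialX_map_eval₂ (Int.castRingHom R) X, ← MvPolynomial.coe_eval₂Hom,
    gCoeff_map, ← RingHom.mapMatrix_apply, ← RingHom.map_det, hgeneric, map_prod]
  simp only [pluecker_map, X₀]

end generic

theorem maximal_minors_of_Gmat_general {R : Type*} [CommRing R] (k n : ℕ) [NeZero n]
    (hkn : k < n)
    (X : Matrix (Fin (n - k)) (Fin n) R)
    (S : Finset ℤ) :
    pluecker k n (Gmat k n X) S
      = (∏ i ∈ Finset.Icc 1 (n - k - 1),
          pluecker k n X (Finset.Icc ((i : ℤ) + k + 1) ((n : ℤ) + i)))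
        * pluecker k n X S := by
  rw [Gmat_eq_gCoeff_mul, pluecker_mul, det_gCoeff hkn]

/-- case `I = [1, n−k]` of Lemma 9.2.
For every subset `S ⊆ {1,…,n}` with `|S| = n − k`, the maximal minors of `G(X)` agree
with those of `X` up to a fixed monomial in cyclically-consecutive Plücker coordinates:
`Δ_S(G(X)) = (∏_{i=1}^{n−k−1} Δ_{[i+k+1, n+i]}(X)) · Δ_S(X)`. -/
theorem maximal_minors_of_Gmat {R : Type*} [CommRing R] (k n : ℕ) [NeZero n]
    (hk : 0 < k) (hkn : k < n)
    (X : Matrix (Fin (n - k)) (Fin n) R)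
    (S : Finset ℤ) (hS : S ⊆ Finset.Icc (1 : ℤ) (n : ℤ)) (hScard : S.card = n - k) :
    pluecker k n (Gmat k n X) S
      = (∏ i ∈ Finset.Icc 1 (n - k - 1),
          pluecker k n X (Finset.Icc ((i : ℤ) + k + 1) ((n : ℤ) + i)))
        * pluecker k n X S :=
  maximal_minors_of_Gmat_general k n hkn X S
end

section
/- Let S be a finite set of positive integers and let i < j < k < l be positive integers none of which lies in S. For a natural number a and a set T of positive integers, let e_a(T) = 1 if {1, 2, …, a} ⊆ T and e_a(T) = 0 otherwise. Then for every a ≥ 0: e_a(S ∪ {i,k}) + e_a(S ∪ {j,l}) = min( e_a(S ∪ {i,j}) + e_a(S ∪ {k,l}), e_a(S ∪ {j,k}) + e_a(S ∪ {i,l}) ). (This is the exponent identity verified in the proof of Theorem 9.1: it expresses that the tropical-semifield coefficients c(S) — whose exponent of the frozen variable Y_{a,a} is e_a — satisfy the tropicalized short Plücker relation c(Sik)c(Sjl) = c(Sij)c(Skl) ⊕ c(Sjk)c(Sil).) -/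
/-- `e_a(T) = 1` if `{1, 2, …, a} ⊆ T` and `e_a(T) = 0` otherwise. -/
def eInd (a : ℕ) (T : Finset ℕ) : ℕ := if Finset.Icc 1 a ⊆ T then 1 else 0

lemma eInd_zero_of (a : ℕ) (T : Finset ℕ) (m : ℕ) (h1 : 1 ≤ m) (h2 : m ≤ a)
    (hm : m ∉ T) : eInd a T = 0 := by
  unfold eInd
  rw [if_neg]
  intro hsub
  exact hm (hsub (Finset.mem_Icc.mpr ⟨h1, h2⟩))

lemma eInd_congr (a : ℕ) (S T T' : Finset ℕ)
    (h : ∀ m, 1 ≤ m → m ≤ a → (m ∈ T ↔ m ∈ T')) :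
    eInd a (S ∪ T) = eInd a (S ∪ T') := by
  unfold eInd
  have key : Finset.Icc 1 a ⊆ S ∪ T ↔ Finset.Icc 1 a ⊆ S ∪ T' := by
    constructor
    · intro hs m hm
      have hm' := Finset.mem_Icc.mp hm
      have hh := hs hm
      rw [Finset.mem_union] at hh ⊢
      rcases hh with h1 | h1
      · exact Or.inl h1
      · exact Or.inr ((h m hm'.1 hm'.2).mp h1)
    · intro hs m hm
      have hm' := Finset.mem_Icc.mp hm
      have hh := hs hm
      rw [Finset.mem_union] at hh ⊢
      rcases hh with h1 | h1
      · exact Or.inl h1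
      · exact Or.inr ((h m hm'.1 hm'.2).mpr h1)
  simp only [key]

/-- the exponent identity from the proof of Theorem 9.1. For a finite
set `S` of positive integers and positive integers `i < j < k < l` none of which lies in
`S`, the exponents `e_a` satisfy the tropicalized short Plücker relation
`e_a(S∪{i,k}) + e_a(S∪{j,l}) = min(e_a(S∪{i,j}) + e_a(S∪{k,l}), e_a(S∪{j,k}) + e_a(S∪{i,l}))`
for every `a ≥ 0`. -/
theorem tropical_short_pluecker_exponents
    (S : Finset ℕ) (hS : ∀ m ∈ S, 0 < m)
    (i j k l : ℕ) (hi : 0 < i) (hij : i < j) (hjk : j < k) (hkl : k < l)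
    (hiS : i ∉ S) (hjS : j ∉ S) (hkS : k ∉ S) (hlS : l ∉ S) :
    ∀ a : ℕ,
      eInd a (S ∪ {i, k}) + eInd a (S ∪ {j, l}) =
        min (eInd a (S ∪ {i, j}) + eInd a (S ∪ {k, l}))
            (eInd a (S ∪ {j, k}) + eInd a (S ∪ {i, l})) := by
  intro a
  rcases lt_or_ge a i with hai | hia
  · -- all pairs irrelevant: everything equals eInd a S
    have h1 : ∀ x y : ℕ, a < x → a < y → eInd a (S ∪ {x, y}) = eInd a (S ∪ (∅ : Finset ℕ)) := by
      intro x y hx hy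
      apply eInd_congr
      intro m hm1 hm2
      simp only [Finset.mem_insert, Finset.mem_singleton, Finset.notMem_empty, iff_false]
      omega
    rw [h1 i k hai (by omega), h1 j l (by omega) (by omega), h1 i j hai (by omega),
        h1 k l (by omega) (by omega), h1 j k (by omega) (by omega), h1 i l hai (by omega)]
    omega
  · rcases lt_or_ge a j with haj | hja
    · -- i ≤ a < j : pairs containing i reduce to {i}, others to ∅
      have h1 : ∀ y : ℕ, a < y → eInd a (S ∪ {i, y}) = eInd a (S ∪ {i}) := by
        intro y hy
        apply eInd_congr
        intro m hm1 hm2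
        simp only [Finset.mem_insert, Finset.mem_singleton]
        omega
      have h0 : ∀ x y : ℕ, a < x → a < y → eInd a (S ∪ {x, y}) = eInd a (S ∪ (∅ : Finset ℕ)) := by
        intro x y hx hy
        apply eInd_congr
        intro m hm1 hm2
        simp only [Finset.mem_insert, Finset.mem_singleton, Finset.notMem_empty, iff_false]
        omega
      rw [h1 k (by omega), h1 j haj, h1 l (by omega), h0 j l haj (by omega),
          h0 k l (by omega) (by omega), h0 j k haj (by omega)]
      omega
    · rcases lt_or_ge a k with hak | hka
      · -- j ≤ a < k : i,j ∈ Icc; every pair misses i or j except {i,j}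
        have z1 : eInd a (S ∪ {i, k}) = 0 := by
          apply eInd_zero_of a _ j (by omega) hja
          simp only [Finset.mem_union, Finset.mem_insert, Finset.mem_singleton]
          push_neg
          exact ⟨hjS, by omega, by omega⟩
        have z2 : eInd a (S ∪ {j, l}) = 0 := by
          apply eInd_zero_of a _ i (by omega) hia
          simp only [Finset.mem_union, Finset.mem_insert, Finset.mem_singleton]
          push_neg
          exact ⟨hiS, by omega, by omega⟩
        have z3 : eInd a (S ∪ {k, l}) = 0 := by
          apply eInd_zero_of a _ i (by omega) hia
          simp only [Finset.mem_union, Finset.mem_insert, Finset.mem_singleton]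
          push_neg
          exact ⟨hiS, by omega, by omega⟩
        have z4 : eInd a (S ∪ {j, k}) = 0 := by
          apply eInd_zero_of a _ i (by omega) hia
          simp only [Finset.mem_union, Finset.mem_insert, Finset.mem_singleton]
          push_neg
          exact ⟨hiS, by omega, by omega⟩
        have z5 : eInd a (S ∪ {i, l}) = 0 := by
          apply eInd_zero_of a _ j (by omega) hja
          simp only [Finset.mem_union, Finset.mem_insert, Finset.mem_singleton]
          push_neg
          exact ⟨hjS, by omega, by omega⟩
        rw [z1, z2, z3, z4, z5]
        omega
      · -- k ≤ a : i,j,k ∈ Icc (and maybe l); every pair misses one of i,j,k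
        have miss : ∀ (T : Finset ℕ) (m : ℕ), 0 < m → m ≤ a → m ∉ S → m ∉ T →
            eInd a (S ∪ T) = 0 := by
          intro T m hm1 hm2 hmS hmT
          apply eInd_zero_of a _ m (by omega) hm2
          simp only [Finset.mem_union]
          push_neg
          exact ⟨hmS, hmT⟩
        have notmem : ∀ m x y : ℕ, m ≠ x → m ≠ y → m ∉ ({x, y} : Finset ℕ) := by
          intro m x y hx hy
          simp only [Finset.mem_insert, Finset.mem_singleton]
          push_neg
          exact ⟨hx, hy⟩
        have z1 := miss {i, k} j (by omega) (by omega) hjS (notmem _ _ _ (by omega) (by omega))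
        have z2 := miss {j, l} i hi hia hiS (notmem _ _ _ (by omega) (by omega))
        have z3 := miss {i, j} k (by omega) hka hkS (notmem _ _ _ (by omega) (by omega))
        have z4 := miss {k, l} i hi hia hiS (notmem _ _ _ (by omega) (by omega))
        have z5 := miss {j, k} i hi hia hiS (notmem _ _ _ (by omega) (by omega))
        have z6 := miss {i, l} j (by omega) hja hjS (notmem _ _ _ (by omega) (by omega))
        rw [z1, z2, z3, z4, z5, z6]
        simp
end

section
/- Let G be the group with presentation ⟨ρ, τ, σ | (ρτ)² = 1, σ² = 1, ρτ = τρ, σρ = τσ⟩ and let D∞ be the infinite dihedral group ⟨r, s | s² = 1, (sr)² = 1⟩. Then the assignment ρ ↦ r, τ ↦ r^{-1}, σ ↦ s extends to a surjective group homomorphism φ : G → D∞, the element ρτ is central in G and has order exactly 2, and the kernel of φ is exactly the subgroup generated by ρτ. Consequently G is a central extension 1 → ℤ/2ℤ → G → D∞ → 1. (This is the structure of the cluster modular group of the annulus with two marked points on each boundary component described in Example 6.8.) -/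
namespace ClusterModularAnnulus

/-- Relators of the presentation `⟨ρ, τ, σ | (ρτ)² = 1, σ² = 1, ρτ = τρ, σρ = τσ⟩`,
with `ρ, τ, σ` the generators `0, 1, 2`. -/
def annulusRels : Set (FreeGroup (Fin 3)) :=
  { (FreeGroup.of 0 * FreeGroup.of 1) ^ 2,
    (FreeGroup.of 2) ^ 2,
    FreeGroup.of 0 * FreeGroup.of 1 * (FreeGroup.of 0)⁻¹ * (FreeGroup.of 1)⁻¹,
    FreeGroup.of 2 * FreeGroup.of 0 * (FreeGroup.of 1 * FreeGroup.of 2)⁻¹ }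

/-- Relators of the infinite dihedral group `D∞ = ⟨r, s | s² = 1, (sr)² = 1⟩`, with
`r, s` the generators `0, 1`. -/
def dihedralInfRels : Set (FreeGroup (Fin 2)) :=
  { (FreeGroup.of 1) ^ 2, (FreeGroup.of 1 * FreeGroup.of 0) ^ 2 }

/-- The cluster modular group of the annulus with two marked points on each boundary
component (Example 6.8). -/
abbrev G := PresentedGroup annulusRels

/-- The infinite dihedral group. -/
abbrev Dinf := PresentedGroup dihedralInfRels

def ρ : G := PresentedGroup.of 0
def τ : G := PresentedGroup.of 1
def σ : G := PresentedGroup.of 2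
def r : Dinf := PresentedGroup.of 0
def s : Dinf := PresentedGroup.of 1

lemma mk_rel_eq_one {α : Type*} {rels : Set (FreeGroup α)} {x : FreeGroup α} (hx : x ∈ rels) :
    PresentedGroup.mk rels x = 1 :=
  (QuotientGroup.eq_one_iff _).mpr (Subgroup.subset_normalClosure hx)

lemma hρτ2 : (ρ * τ) ^ 2 = 1 := by
  have := mk_rel_eq_one (rels := annulusRels)
    (x := (FreeGroup.of 0 * FreeGroup.of 1) ^ 2) (by simp [annulusRels])
  simpa [ρ, τ, PresentedGroup.of, map_mul, map_pow] using this

lemma hσ2 : σ * σ = 1 := by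
  have := mk_rel_eq_one (rels := annulusRels)
    (x := (FreeGroup.of 2) ^ 2) (by simp [annulusRels])
  simpa [σ, PresentedGroup.of, map_pow, sq] using this

lemma hcomm : ρ * τ = τ * ρ := by
  have := mk_rel_eq_one (rels := annulusRels)
    (x := FreeGroup.of 0 * FreeGroup.of 1 * (FreeGroup.of 0)⁻¹ * (FreeGroup.of 1)⁻¹)
    (by simp [annulusRels])
  set a := PresentedGroup.mk annulusRels (FreeGroup.of 0)
  set b := PresentedGroup.mk annulusRels (FreeGroup.of 1)
  simp only [ρ, τ, PresentedGroup.of, map_mul, map_inv] at this ⊢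
  have h2 : a * b = (a * b * a⁻¹ * b⁻¹) * (b * a) := by group
  rw [this, one_mul] at h2
  exact h2

lemma hσρ : σ * ρ = τ * σ := by
  have := mk_rel_eq_one (rels := annulusRels)
    (x := FreeGroup.of 2 * FreeGroup.of 0 * (FreeGroup.of 1 * FreeGroup.of 2)⁻¹)
    (by simp [annulusRels])
  set a := PresentedGroup.mk annulusRels (FreeGroup.of 2)
  set b := PresentedGroup.mk annulusRels (FreeGroup.of 0)
  set c := PresentedGroup.mk annulusRels (FreeGroup.of 1)
  simp only [ρ, τ, σ, PresentedGroup.of, map_mul, map_inv] at this ⊢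
  have h2 : a * b = (a * b * (c * a)⁻¹) * (c * a) := by group
  rw [this, one_mul] at h2
  exact h2

lemma hστ : σ * τ = ρ * σ := by
  have h1 : σ * τ * (σ * σ) = σ * (τ * σ) * σ := by group
  rw [hσ2, mul_one, ← hσρ] at h1
  calc σ * τ = σ * (σ * ρ) * σ := h1
    _ = (σ * σ) * ρ * σ := by group
    _ = ρ * σ := by rw [hσ2]; group

lemma hs2 : s * s = 1 := by
  have := mk_rel_eq_one (rels := dihedralInfRels)
    (x := (FreeGroup.of 1) ^ 2) (by simp [dihedralInfRels])
  simpa [s, PresentedGroup.of, map_pow, sq] using this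

lemma hsr2 : s * r * (s * r) = 1 := by
  have := mk_rel_eq_one (rels := dihedralInfRels)
    (x := (FreeGroup.of 1 * FreeGroup.of 0) ^ 2) (by simp [dihedralInfRels])
  simpa [s, r, PresentedGroup.of, map_pow, map_mul, sq] using this

/-- the defining map for `φ`. -/
def fφ : Fin 3 → Dinf := ![r, r⁻¹, s]

lemma fφ_rels : ∀ x ∈ annulusRels, FreeGroup.lift fφ x = 1 := by
  intro x hx
  have hsinv : s⁻¹ = s := by
    rw [inv_eq_iff_mul_eq_one, hs2]
  rcases hx with h | h | h | h <;> subst h <;>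
    simp only [fφ, map_mul, map_pow, map_inv, FreeGroup.lift_apply_of, Matrix.cons_val_zero,
      Matrix.cons_val_one, Matrix.head_cons, Matrix.cons_val_two, Matrix.tail_cons]
  · group
  · rw [sq, hs2]
  · group
  · rw [mul_inv_rev, inv_inv, hsinv]
    exact hsr2

def φ : G →* Dinf := PresentedGroup.toGroup fφ_rels

lemma φρ : φ ρ = r := PresentedGroup.toGroup.of fφ_rels
lemma φτ : φ τ = r⁻¹ := PresentedGroup.toGroup.of fφ_rels
lemma φσ : φ σ = s := PresentedGroup.toGroup.of fφ_rels

lemma φ_surj : Function.Surjective φ := by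
  rw [← MonoidHom.range_eq_top]
  rw [← top_le_iff, ← PresentedGroup.closure_range_of dihedralInfRels, Subgroup.closure_le]
  rintro _ ⟨i, rfl⟩
  fin_cases i
  · exact ⟨ρ, φρ⟩
  · exact ⟨σ, φσ⟩

lemma ρτ_central : ρ * τ ∈ Subgroup.center G := by
  rw [Subgroup.mem_center_iff]
  intro g
  have : g ∈ Subgroup.centralizer {ρ * τ} := by
    refine PresentedGroup.generated_by annulusRels _ ?_ g
    intro j
    rw [Subgroup.mem_centralizer_iff]
    fin_cases j <;> rintro _ rfl
    · show ρ * τ * ρ = ρ * (ρ * τ)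
      rw [mul_assoc, hcomm]
    · show ρ * τ * τ = τ * (ρ * τ)
      conv_lhs => rw [hcomm]
      rw [mul_assoc]
    · show ρ * τ * σ = σ * (ρ * τ)
      calc ρ * τ * σ = ρ * (τ * σ) := by group
        _ = ρ * (σ * ρ) := by rw [hσρ]
        _ = (ρ * σ) * ρ := by group
        _ = (σ * τ) * ρ := by rw [hστ]
        _ = σ * (τ * ρ) := by group
        _ = σ * (ρ * τ) := by rw [hcomm]
  rw [Subgroup.mem_centralizer_iff] at this
  exact (this (ρ * τ) rfl).symm

/-- abelianized detection map into `ℤ/4`. -/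
def fψ : Fin 3 → Multiplicative (ZMod 4) := ![Multiplicative.ofAdd 1, Multiplicative.ofAdd 1, 1]

lemma fψ_rels : ∀ x ∈ annulusRels, FreeGroup.lift fψ x = 1 := by
  intro x hx
  rcases hx with h | h | h | h <;> subst h <;>
    simp [fψ, map_mul, map_pow, map_inv, FreeGroup.lift_apply_of] <;> decide

def ψ : G →* Multiplicative (ZMod 4) := PresentedGroup.toGroup fψ_rels

lemma ρτ_ne_one : ρ * τ ≠ 1 := by
  intro h
  have : ψ (ρ * τ) = 1 := by rw [h, map_one]
  rw [map_mul] at this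
  have h0 : ψ ρ = Multiplicative.ofAdd 1 := PresentedGroup.toGroup.of fψ_rels
  have h1 : ψ τ = Multiplicative.ofAdd 1 := PresentedGroup.toGroup.of fψ_rels
  rw [h0, h1] at this
  exact absurd this (by decide)

lemma ρτ_order : orderOf (ρ * τ) = 2 :=
  orderOf_eq_prime hρτ2 ρτ_ne_one

/-- The subgroup generated by `ρτ`. -/
def N : Subgroup G := Subgroup.closure {ρ * τ}

instance : N.Normal := by
  constructor
  intro n hn g
  have h : g * n = n * g := (Subgroup.mem_center_iff.mp
    (Subgroup.closure_le (Subgroup.center G) |>.mpr (by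
      rintro _ rfl
      exact ρτ_central) hn) g)
  have h2 : g * n * g⁻¹ = n := by rw [h]; group
  rwa [h2]

lemma N_le_ker : N ≤ φ.ker := by
  rw [N, Subgroup.closure_le]
  rintro _ rfl
  rw [SetLike.mem_coe, MonoidHom.mem_ker, map_mul, φρ, φτ, mul_inv_cancel]

/-- `φ` descends to the quotient by `N`. -/
def ψ' : G ⧸ N →* Dinf :=
  QuotientGroup.lift N φ fun x hx => N_le_ker hx

/-- the defining map for the splitting `χ : D∞ → G/N`. -/
def fχ : Fin 2 → G ⧸ N := ![QuotientGroup.mk ρ, QuotientGroup.mk σ]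

lemma fχ_rels : ∀ x ∈ dihedralInfRels, FreeGroup.lift fχ x = 1 := by
  intro x hx
  rcases hx with h | h <;> subst h <;>
    simp only [fχ, map_mul, map_pow, FreeGroup.lift_apply_of, Matrix.cons_val_zero,
      Matrix.cons_val_one, Matrix.head_cons]
  · rw [sq, ← QuotientGroup.mk_mul, hσ2, QuotientGroup.mk_one]
  · rw [sq, ← QuotientGroup.mk_mul, ← QuotientGroup.mk_mul]
    rw [QuotientGroup.eq_one_iff]
    have : σ * ρ * (σ * ρ) = ρ * τ := by
      calc σ * ρ * (σ * ρ) = (σ * ρ) * σ * ρ := by group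
        _ = (τ * σ) * σ * ρ := by rw [hσρ]
        _ = τ * (σ * σ) * ρ := by group
        _ = τ * ρ := by rw [hσ2]; group
        _ = ρ * τ := hcomm.symm
    rw [this]
    exact Subgroup.subset_closure rfl

def χ : Dinf →* G ⧸ N := PresentedGroup.toGroup fχ_rels

lemma χψ' : χ.comp ψ' = MonoidHom.id _ := by
  apply QuotientGroup.monoidHom_ext
  apply PresentedGroup.ext
  intro x
  fin_cases x <;>
    simp only [MonoidHom.comp_apply, MonoidHom.id_apply, QuotientGroup.mk'_apply]
  · show χ (ψ' (QuotientGroup.mk ρ)) = QuotientGroup.mk ρ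
    rw [show ψ' (QuotientGroup.mk ρ) = φ ρ from rfl, φρ]
    exact PresentedGroup.toGroup.of fχ_rels
  · show χ (ψ' (QuotientGroup.mk τ)) = QuotientGroup.mk τ
    rw [show ψ' (QuotientGroup.mk τ) = φ τ from rfl, φτ, map_inv]
    have hχr : χ r = QuotientGroup.mk ρ := PresentedGroup.toGroup.of fχ_rels
    rw [hχr, ← QuotientGroup.mk_inv, QuotientGroup.eq_iff_div_mem]
    have h : ρ⁻¹ / τ = (τ * ρ)⁻¹ := by rw [mul_inv_rev, div_eq_mul_inv]
    rw [h, ← hcomm]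
    exact N.inv_mem (Subgroup.subset_closure rfl)
  · show χ (ψ' (QuotientGroup.mk σ)) = QuotientGroup.mk σ
    rw [show ψ' (QuotientGroup.mk σ) = φ σ from rfl, φσ]
    exact PresentedGroup.toGroup.of fχ_rels

lemma ker_eq : φ.ker = N := by
  refine le_antisymm ?_ N_le_ker
  intro x hx
  rw [MonoidHom.mem_ker] at hx
  have h1 : ψ' (QuotientGroup.mk x) = 1 := hx
  have h2 : χ (ψ' (QuotientGroup.mk x)) = QuotientGroup.mk x :=
    DFunLike.congr_fun χψ' (QuotientGroup.mk x)
  rw [h1, map_one] at h2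
  exact (QuotientGroup.eq_one_iff x).mp h2.symm

/-- structure of the group in Example 6.8.
The assignment `ρ ↦ r`, `τ ↦ r⁻¹`, `σ ↦ s` extends to a surjective homomorphism
`φ : G → D∞`; the element `ρτ` is central in `G` of order exactly `2`; and the kernel of
`φ` is exactly the subgroup generated by `ρτ`.  Hence `G` is a central extension
`1 → ℤ/2ℤ → G → D∞ → 1`. -/
theorem annulus_group_central_extension :
    ∃ φ : G →* Dinf,
      φ ρ = r ∧ φ τ = r⁻¹ ∧ φ σ = s ∧
      Function.Surjective φ ∧
      ρ * τ ∈ Subgroup.center G ∧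
      orderOf (ρ * τ) = 2 ∧
      φ.ker = Subgroup.closure {ρ * τ} :=
  ⟨φ, φρ, φτ, φσ, φ_surj, ρτ_central, ρτ_order, ker_eq⟩

end ClusterModularAnnulus
end

section
/- Let (B, p, x) be a normalized seed of rank n in F over the semifield P, fix k ∈ {1,…,n} with b_{kk} = 0, and let (B', p', x') = μ_k(B, p, x) be its normalized mutation in direction k. If x'_k ≠ 0, then normalized mutation in direction k applied to (B', p', x') returns the original seed: μ_k(B', p', x') = (B, p, x). (Normalized seed mutation is involutive, as asserted in Section 4.) -/
open scoped BigOperators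

/-- A (labeled) seed of rank `n` in the field `F` over the coefficient group `P ⊆ Fˣ`:
an `n×n` integer exchange matrix `B`, a `2n`-tuple of coefficients
`(p_1^+, p_1^-, …, p_n^+, p_n^-)` in `P`, and an `n`-tuple `x` of elements of `F`. -/
structure Seed (n : ℕ) (F : Type*) [Field F] (P : Subgroup Fˣ) where
  B : Matrix (Fin n) (Fin n) ℤ
  pP : Fin n → P
  pM : Fin n → P
  x : Fin n → F

/-- Normalized seed mutation in direction `k`, relative to the auxiliary addition `add`
on `P`:  `B` mutates by matrix mutation; `x'_j = x_j` for `j ≠ k` while `x'_k` is given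
by the exchange relation; `p'_k^± = p_k^∓`, and for `j ≠ k` the coefficients are
recovered by normalization from the mutated ratios
`y'_j = y_j·(p_k^+)^{b_{kj}}` (if `b_{kj} ≥ 0`) or `y'_j = y_j·(p_k^-)^{b_{kj}}`
(if `b_{kj} ≤ 0`), via `p'_j^+ = y'_j·(1 ⊕ y'_j)⁻¹`, `p'_j^- = (1 ⊕ y'_j)⁻¹`. -/
def nMutate {n : ℕ} {F : Type*} [Field F] {P : Subgroup Fˣ}
    (add : P → P → P) (s : Seed n F P) (k : Fin n) : Seed n F P where
  B := Matrix.of fun i j =>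
    if i = k ∨ j = k then -s.B i j
    else s.B i j + Int.sign (s.B i k) * max (s.B i k * s.B k j) 0
  pP := fun j =>
    if j = k then s.pM k
    else
      letI y' : P := s.pP j * (s.pM j)⁻¹ *
        (if 0 ≤ s.B k j then s.pP k ^ (s.B k j) else s.pM k ^ (s.B k j))
      y' * (add 1 y')⁻¹
  pM := fun j =>
    if j = k then s.pP k
    else
      letI y' : P := s.pP j * (s.pM j)⁻¹ *
        (if 0 ≤ s.B k j then s.pP k ^ (s.B k j) else s.pM k ^ (s.B k j))
      (add 1 y')⁻¹
  x := fun j =>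
    if j = k then
      (s.x k)⁻¹ * (((s.pP k : Fˣ) : F) * ∏ i, s.x i ^ (max (s.B i k) 0)
        + ((s.pM k : Fˣ) : F) * ∏ i, s.x i ^ (max (-s.B i k) 0))
    else s.x j

/-- Normalized seed mutation is involutive: if `(B, p, x)` is a
normalized seed (so `P` is a semifield and `p_j^+ ⊕ p_j^- = 1` for all `j`), the entries
of `x` are nonzero, `b_{kk} = 0`, and the exchanged cluster variable `x'_k` is nonzero,
then mutating twice in direction `k` returns the original seed. -/
theorem nMutate_involutive
    (n : ℕ) (hn : 1 ≤ n) (F : Type*) [Field F] (P : Subgroup Fˣ)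
    (add : P → P → P)
    (hcomm : ∀ a b, add a b = add b a)
    (hassoc : ∀ a b c, add (add a b) c = add a (add b c))
    (hdistrib : ∀ a b c : P, a * add b c = add (a * b) (a * c))
    (s : Seed n F P) (k : Fin n)
    (hnorm : ∀ j, add (s.pP j) (s.pM j) = 1)
    (hBkk : s.B k k = 0)
    (hx : ∀ j, s.x j ≠ 0)
    (hx'k : (nMutate add s k).x k ≠ 0) :
    nMutate add (nMutate add s k) k = s := by
  have key : ∀ a b : P, add a b = 1 → add 1 (a * b⁻¹) = b⁻¹ := by
    intro a b h
    have := hdistrib b⁻¹ b a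
    rw [inv_mul_cancel, hcomm b a, h, mul_one, mul_comm b⁻¹ a] at this
    exact this.symm
  obtain ⟨B, pP, pM, x⟩ := s
  simp only [nMutate] at hx'k ⊢
  simp only at hnorm hBkk hx
  simp only [Seed.mk.injEq]
  refine ⟨?_, ?_, ?_, ?_⟩
  · -- matrix
    funext i j
    simp only [Matrix.of_apply]
    by_cases h : i = k ∨ j = k
    · simp [h]
    · push_neg at h
      simp only [h.1, h.2, or_self, if_false, if_neg h.1, Matrix.of_apply,
        if_pos (Or.inr rfl), if_pos (Or.inl rfl), Int.sign_neg, neg_mul_neg,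
        if_neg (not_or.mpr h), or_true, true_or, if_true]
      ring
  · -- pP
    funext j
    by_cases hj : j = k
    · simp [hj]
    · have hcd : (if 0 ≤ B k j then pP k ^ B k j else pM k ^ B k j) *
          (if 0 ≤ -B k j then pM k ^ (-B k j) else pP k ^ (-B k j)) = 1 := by
        rcases lt_trichotomy (B k j) 0 with h | h | h
        · rw [if_neg (not_le.mpr h), if_pos (by omega), ← zpow_add]
          simp
        · simp [h]
        · rw [if_pos h.le, if_neg (by omega), ← zpow_add]
          simp
      have hy : (pP j * (pM j)⁻¹ *
            (if 0 ≤ B k j then pP k ^ B k j else pM k ^ B k j)) *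
          (if 0 ≤ -B k j then pM k ^ (-B k j) else pP k ^ (-B k j)) =
          pP j * (pM j)⁻¹ := by
        rw [mul_assoc, hcd, mul_one]
      simp only [if_neg hj, Matrix.of_apply, eq_self_iff_true, true_or, or_true,
        if_true, inv_inv, mul_inv_cancel_right, inv_mul_cancel_right]
      rw [hy, key _ _ (hnorm j)]
      simp [mul_assoc]
  · -- pM
    funext j
    by_cases hj : j = k
    · simp [hj]
    · have hcd : (if 0 ≤ B k j then pP k ^ B k j else pM k ^ B k j) *
          (if 0 ≤ -B k j then pM k ^ (-B k j) else pP k ^ (-B k j)) = 1 := by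
        rcases lt_trichotomy (B k j) 0 with h | h | h
        · rw [if_neg (not_le.mpr h), if_pos (by omega), ← zpow_add]
          simp
        · simp [h]
        · rw [if_pos h.le, if_neg (by omega), ← zpow_add]
          simp
      have hy : (pP j * (pM j)⁻¹ *
            (if 0 ≤ B k j then pP k ^ B k j else pM k ^ B k j)) *
          (if 0 ≤ -B k j then pM k ^ (-B k j) else pP k ^ (-B k j)) =
          pP j * (pM j)⁻¹ := by
        rw [mul_assoc, hcd, mul_one]
      simp only [if_neg hj, Matrix.of_apply, eq_self_iff_true, true_or, or_true,
        if_true, inv_inv, mul_inv_cancel_right, inv_mul_cancel_right]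
      rw [hy, key _ _ (hnorm j), inv_inv]
  · -- x
    funext j
    by_cases hj : j = k
    · subst hj
      simp only [if_true, eq_self_iff_true] at hx'k
      simp only [if_pos rfl, Matrix.of_apply, eq_self_iff_true, true_or, or_true,
        if_true, neg_neg]
      set L := ∏ i, x i ^ (B i j ⊔ 0) with hL
      set M := ∏ i, x i ^ (-B i j ⊔ 0) with hM
      set X := (x j)⁻¹ * (((pP j : Fˣ) : F) * L + ((pM j : Fˣ) : F) * M) with hXdef
      have h1 : ∏ i, (if i = j then X else x i) ^ (-B i j ⊔ 0) = M := by
        refine Finset.prod_congr rfl fun i _ => ?_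
        by_cases hi : i = j
        · subst hi; simp [hBkk]
        · simp [hi]
      have h2 : ∏ i, (if i = j then X else x i) ^ (B i j ⊔ 0) = L := by
        refine Finset.prod_congr rfl fun i _ => ?_
        by_cases hi : i = j
        · subst hi; simp [hBkk]
        · simp [hi]
      rw [h1, h2]
      have hS : X * x j = ((pP j : Fˣ) : F) * L + ((pM j : Fˣ) : F) * M := by
        rw [hXdef, mul_comm ((x j)⁻¹) _, mul_assoc, inv_mul_cancel₀ (hx j), mul_one]
      rw [add_comm, ← hS, inv_mul_cancel_left₀ hx'k]
    · simp [hj]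
end
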